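/- Let d ≠ 0, ζ ∈ ℝ, and consider the operator L_{d,ζ} on H²_per([0,2π]; ℝ²) defined by L_{d,ζ}(B₁,B₂) = (-dB₁'' + ζB₁ + B₂, -dB₂'' + ζB₂ - B₁). If (B₁,B₂) ∈ H²_per satisfies L_{d,ζ}(B₁,B₂) = (g₁,g₂) with (g₁,g₂) ∈ L²([0,2π];ℝ²), then ‖(B₁,B₂)‖_{L²} ≤ min{1, 1/(sign(d)·ζ)₊} · ‖(g₁,g₂)‖_{L²}, where x₊ denotes the positive part and 1/0₊ := +∞ (i.e. the bound is min{1, (sign(d)ζ)₊^{-1}}). -/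

import Mathlib

/-!
Testing the system against `(B₁, B₂)` and against `(B₂, -B₁)` and integrating over a period
(the boundary terms cancel by periodicity) gives
`∫ (g₁ B₁ + g₂ B₂) = d ∫ (B₁'² + B₂'²) + ζ ∫ (B₁² + B₂²)` and `∫ (g₁ B₂ - g₂ B₁) = ∫ (B₁² + B₂²)`.
By Cauchy–Schwarz the second identity gives `‖B‖² ≤ ‖g‖ ‖B‖`, and the first one, multiplied by
`sign d` (note `sign d * d = |d| ≥ 0`), gives `sign d * ζ * ‖B‖² ≤ ‖g‖ ‖B‖`.
-/

open Real intervalIntegral Function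

theorem Real.sign_mul_le_abs (r x : ℝ) : sign r * x ≤ |x| := by
  rcases sign_apply_eq r with h | h | h <;> simp only [h] <;> linarith [neg_abs_le x, le_abs_self x]

theorem mul_le_of_mul_sq_le_mul {b c G : ℝ} (hb : 0 ≤ b) (hG : 0 ≤ G) (h : c * b ^ 2 ≤ G * b) :
    c * b ≤ G := by
  rcases hb.eq_or_lt with rfl | hb
  · simpa using hG
  · nlinarith

theorem abs_integral_mul_add_mul_le_sqrt_mul_sqrt {a b : ℝ} (hab : a ≤ b) {f₁ f₂ g₁ g₂ : ℝ → ℝ}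
    (hf₁ : Continuous f₁) (hf₂ : Continuous f₂) (hg₁ : Continuous g₁) (hg₂ : Continuous g₂) :
    |∫ x in a..b, (f₁ x * g₁ x + f₂ x * g₂ x)| ≤
      √(∫ x in a..b, (f₁ x ^ 2 + f₂ x ^ 2)) * √(∫ x in a..b, (g₁ x ^ 2 + g₂ x ^ 2)) := by
  set P := ∫ x in a..b, (f₁ x * g₁ x + f₂ x * g₂ x)
  set X := ∫ x in a..b, (f₁ x ^ 2 + f₂ x ^ 2)
  set Y := ∫ x in a..b, (g₁ x ^ 2 + g₂ x ^ 2)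
  have hX : 0 ≤ X := integral_nonneg hab fun x _ => by positivity
  have hquad : ∀ t : ℝ, 0 ≤ X * (t * t) + 2 * P * t + Y := by
    intro t
    have hexpand : ∫ x in a..b, ((t * f₁ x + g₁ x) ^ 2 + (t * f₂ x + g₂ x) ^ 2)
        = X * (t * t) + 2 * P * t + Y := by
      have hpt : ∀ x, (t * f₁ x + g₁ x) ^ 2 + (t * f₂ x + g₂ x) ^ 2 =
          (t * t) * (f₁ x ^ 2 + f₂ x ^ 2) + 2 * t * (f₁ x * g₁ x + f₂ x * g₂ x) +
            (g₁ x ^ 2 + g₂ x ^ 2) := fun x => by ring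
      simp_rw [hpt]
      rw [integral_add, integral_add, integral_const_mul, integral_const_mul]
      · ring
      all_goals exact Continuous.intervalIntegrable (by fun_prop) _ _
    rw [← hexpand]
    exact integral_nonneg hab fun x _ => by positivity
  have hdisc := discrim_le_zero hquad
  rw [discrim] at hdisc
  rw [← sqrt_mul hX]
  exact abs_le_sqrt (by nlinarith)

theorem Function.Periodic.integral_deriv_eq_zero {E : Type*} [NormedAddCommGroup E]
    [NormedSpace ℝ E] [CompleteSpace E] {F f : ℝ → E} {T : ℝ} (hF : Periodic F T)
    (hderiv : ∀ x, HasDerivAt F (f x) x) (hf : IntervalIntegrable f MeasureTheory.volume 0 T) :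
    ∫ x in 0..T, f x = 0 := by
  rw [integral_eq_sub_of_hasDerivAt (fun x _ => hderiv x) hf, sub_eq_zero]
  simpa using hF 0

theorem Function.Periodic.deriv {𝕜 E : Type*} [NontriviallyNormedField 𝕜] [NormedAddCommGroup E]
    [NormedSpace 𝕜 E] {f : 𝕜 → E} {T : 𝕜} (hf : Periodic f T) : Periodic (deriv f) T := fun x => by
  rw [← deriv_comp_add_const]
  exact congrArg (_root_.deriv · x) (funext fun y => hf y)

theorem ContDiff.hasDerivAt_deriv_deriv {f : ℝ → ℝ} (hf : ContDiff ℝ 2 f) (x : ℝ) :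
    HasDerivAt f (deriv f x) x ∧ HasDerivAt (deriv f) (deriv (deriv f) x) x :=
  ⟨(hf.differentiable two_ne_zero x).hasDerivAt,
    ((ContDiff.deriv' (n := 1) hf).differentiable one_ne_zero x).hasDerivAt⟩

theorem ContDiff.continuous_deriv_deriv {f : ℝ → ℝ} (hf : ContDiff ℝ 2 f) :
    Continuous (deriv (deriv f)) :=
  (ContDiff.deriv' (n := 1) hf).continuous_deriv le_rfl

section PeriodicResolvent

variable {d ζ T : ℝ} {B₁ B₂ g₁ g₂ : ℝ → ℝ}

theorem continuous_of_resolvent_eq (hB₁ : ContDiff ℝ 2 B₁) (hB₂ : ContDiff ℝ 2 B₂)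
    (hg₁ : ∀ x, g₁ x = -d * deriv (deriv B₁) x + ζ * B₁ x + B₂ x)
    (hg₂ : ∀ x, g₂ x = -d * deriv (deriv B₂) x + ζ * B₂ x - B₁ x) :
    Continuous g₁ ∧ Continuous g₂ := by
  have := hB₁.continuous_deriv_deriv
  have := hB₂.continuous_deriv_deriv
  have := hB₁.continuous
  have := hB₂.continuous
  exact ⟨by rw [funext hg₁]; fun_prop, by rw [funext hg₂]; fun_prop⟩

theorem integral_skew_pairing_eq (hB₁ : ContDiff ℝ 2 B₁) (hB₂ : ContDiff ℝ 2 B₂)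
    (hp₁ : Periodic B₁ T) (hp₂ : Periodic B₂ T)
    (hg₁ : ∀ x, g₁ x = -d * deriv (deriv B₁) x + ζ * B₁ x + B₂ x)
    (hg₂ : ∀ x, g₂ x = -d * deriv (deriv B₂) x + ζ * B₂ x - B₁ x) :
    ∫ x in 0..T, (g₁ x * B₂ x - g₂ x * B₁ x) = ∫ x in 0..T, (B₁ x ^ 2 + B₂ x ^ 2) := by
  have hF : ∀ x, HasDerivAt (fun x => -d * (deriv B₁ x * B₂ x - deriv B₂ x * B₁ x))
      (g₁ x * B₂ x - g₂ x * B₁ x - (B₁ x ^ 2 + B₂ x ^ 2)) x := fun x => by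
    obtain ⟨h₁, h₁'⟩ := hB₁.hasDerivAt_deriv_deriv x
    obtain ⟨h₂, h₂'⟩ := hB₂.hasDerivAt_deriv_deriv x
    refine (((h₁'.mul h₂).sub (h₂'.mul h₁)).const_mul (-d)).congr_deriv ?_
    rw [hg₁, hg₂]
    ring
  have hper : Periodic (fun x => -d * (deriv B₁ x * B₂ x - deriv B₂ x * B₁ x)) T := fun x => by
    simp only [hp₁ x, hp₂ x, hp₁.deriv x, hp₂.deriv x]
  obtain ⟨_, _⟩ := continuous_of_resolvent_eq hB₁ hB₂ hg₁ hg₂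
  have := hB₁.continuous
  have := hB₂.continuous
  have hzero := hper.integral_deriv_eq_zero hF (Continuous.intervalIntegrable (by fun_prop) _ _)
  rwa [integral_sub (Continuous.intervalIntegrable (by fun_prop) _ _)
    (Continuous.intervalIntegrable (by fun_prop) _ _), sub_eq_zero] at hzero

theorem integral_pairing_eq (hB₁ : ContDiff ℝ 2 B₁) (hB₂ : ContDiff ℝ 2 B₂)
    (hp₁ : Periodic B₁ T) (hp₂ : Periodic B₂ T)
    (hg₁ : ∀ x, g₁ x = -d * deriv (deriv B₁) x + ζ * B₁ x + B₂ x)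
    (hg₂ : ∀ x, g₂ x = -d * deriv (deriv B₂) x + ζ * B₂ x - B₁ x) :
    ∫ x in 0..T, (g₁ x * B₁ x + g₂ x * B₂ x) =
      d * (∫ x in 0..T, (deriv B₁ x ^ 2 + deriv B₂ x ^ 2)) +
        ζ * ∫ x in 0..T, (B₁ x ^ 2 + B₂ x ^ 2) := by
  have hF : ∀ x, HasDerivAt (fun x => -d * (deriv B₁ x * B₁ x + deriv B₂ x * B₂ x))
      (g₁ x * B₁ x + g₂ x * B₂ x -
        (d * (deriv B₁ x ^ 2 + deriv B₂ x ^ 2) + ζ * (B₁ x ^ 2 + B₂ x ^ 2))) x := fun x => by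
    obtain ⟨h₁, h₁'⟩ := hB₁.hasDerivAt_deriv_deriv x
    obtain ⟨h₂, h₂'⟩ := hB₂.hasDerivAt_deriv_deriv x
    refine (((h₁'.mul h₁).add (h₂'.mul h₂)).const_mul (-d)).congr_deriv ?_
    rw [hg₁, hg₂]
    ring
  have hper : Periodic (fun x => -d * (deriv B₁ x * B₁ x + deriv B₂ x * B₂ x)) T := fun x => by
    simp only [hp₁ x, hp₂ x, hp₁.deriv x, hp₂.deriv x]
  obtain ⟨_, _⟩ := continuous_of_resolvent_eq hB₁ hB₂ hg₁ hg₂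
  have := hB₁.continuous_deriv one_le_two
  have := hB₂.continuous_deriv one_le_two
  have := hB₁.continuous
  have := hB₂.continuous
  have hzero := hper.integral_deriv_eq_zero hF (Continuous.intervalIntegrable (by fun_prop) _ _)
  rw [integral_sub (Continuous.intervalIntegrable (by fun_prop) _ _)
    (Continuous.intervalIntegrable (by fun_prop) _ _), sub_eq_zero] at hzero
  rw [hzero, integral_add (Continuous.intervalIntegrable (by fun_prop) _ _)
    (Continuous.intervalIntegrable (by fun_prop) _ _), integral_const_mul, integral_const_mul]

end PeriodicResolvent

theorem stmt_9 (d ζ : ℝ) (B1 B2 g1 g2 : ℝ → ℝ)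
    (hB1 : ContDiff ℝ 2 B1) (hB2 : ContDiff ℝ 2 B2)
    (hp1 : Function.Periodic B1 (2 * π)) (hp2 : Function.Periodic B2 (2 * π))
    (hg1 : ∀ x, g1 x = -d * deriv (deriv B1) x + ζ * B1 x + B2 x)
    (hg2 : ∀ x, g2 x = -d * deriv (deriv B2) x + ζ * B2 x - B1 x) :
    Real.sqrt (∫ x in (0:ℝ)..(2 * π), (B1 x ^ 2 + B2 x ^ 2))
      ≤ (if 0 < Real.sign d * ζ then min 1 (Real.sign d * ζ)⁻¹ else 1) *
        Real.sqrt (∫ x in (0:ℝ)..(2 * π), (g1 x ^ 2 + g2 x ^ 2)) := by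
  obtain ⟨hcg1, hcg2⟩ := continuous_of_resolvent_eq hB1 hB2 hg1 hg2
  set b := √(∫ x in (0:ℝ)..(2 * π), (B1 x ^ 2 + B2 x ^ 2))
  set G := √(∫ x in (0:ℝ)..(2 * π), (g1 x ^ 2 + g2 x ^ 2))
  have hb2 : b ^ 2 = ∫ x in (0:ℝ)..(2 * π), (B1 x ^ 2 + B2 x ^ 2) :=
    sq_sqrt (integral_nonneg two_pi_pos.le fun _ _ => by positivity)
  have hb_le : b ≤ G := by
    have hCS := abs_integral_mul_add_mul_le_sqrt_mul_sqrt two_pi_pos.le hcg1 hcg2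
      hB2.continuous hB1.continuous.neg
    simp only [Pi.neg_apply, mul_neg, ← sub_eq_add_neg, neg_sq, add_comm (B2 _ ^ 2)] at hCS
    rw [integral_skew_pairing_eq hB1 hB2 hp1 hp2 hg1 hg2] at hCS
    have h : 1 * b ^ 2 ≤ G * b := by
      rw [one_mul, hb2]
      exact (le_abs_self _).trans hCS
    simpa using mul_le_of_mul_sq_le_mul (sqrt_nonneg _) (sqrt_nonneg _) h
  have hζ_le : sign d * ζ * b ≤ G := by
    have hCS := abs_integral_mul_add_mul_le_sqrt_mul_sqrt two_pi_pos.le hcg1 hcg2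
      hB1.continuous hB2.continuous
    rw [integral_pairing_eq hB1 hB2 hp1 hp2 hg1 hg2] at hCS
    set K := ∫ x in (0:ℝ)..(2 * π), (deriv B1 x ^ 2 + deriv B2 x ^ 2)
    have hK : 0 ≤ K := integral_nonneg two_pi_pos.le fun _ _ => by positivity
    refine mul_le_of_mul_sq_le_mul (sqrt_nonneg _) (sqrt_nonneg _) ?_
    calc sign d * ζ * b ^ 2 ≤ sign d * (d * K + ζ * b ^ 2) := by
          nlinarith [mul_nonneg (sign_mul_nonneg d) hK]
      _ ≤ |d * K + ζ * b ^ 2| := sign_mul_le_abs d _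
      _ ≤ G * b := by rwa [hb2]
  split_ifs with hσζ
  · rw [min_mul_of_nonneg _ _ (sqrt_nonneg _), one_mul]
    exact le_min hb_le ((le_inv_mul_iff₀ hσζ).2 hζ_le)
  · rwa [one_mul]
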